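/- Fix a > 0, V_R < V_F and b0 = 0. Every steady state (rho_inf, N_inf) of the NNLIF system with connectivity b satisfies the first-moment identity ∫_{-infty}^{V_F} v rho_inf(v) dv = (b - (V_F - V_R)) N_inf. -/

import Mathlib

open Real Set Filter MeasureTheory Topology

/-- A steady state of the NNLIF system (with `b0 = 0`), with `rho'`, `rho''`
playing the role of the first and second derivatives of the profile `rho`,
and `limm`, `limp` the one-sided limits of `rho'` at `V_R`. -/
structure NNLIFSteadyState (a b VR VF : ℝ) where
  rho : ℝ → ℝ
  Ninf : ℝ
  rho' : ℝ → ℝ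
  rho'' : ℝ → ℝ
  limm : ℝ
  limp : ℝ
  Ninf_pos : 0 < Ninf
  rho_nonneg : ∀ v ≤ VF, 0 ≤ rho v
  rho_cont : ContinuousOn rho (Iic VF)
  rho_int : IntegrableOn rho (Iic VF)
  rho_mass : (∫ v in Iic VF, rho v) = 1
  rho'_def : ∀ v ∈ Iio VR ∪ Ioo VR VF, HasDerivWithinAt rho (rho' v) (Iic VF) v
  rho''_def : ∀ v ∈ Iio VR ∪ Ioo VR VF, HasDerivWithinAt rho' (rho'' v) (Iic VF) v
  rho'_cont : ContinuousOn rho' (Iio VR ∪ Ioo VR VF)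
  rho''_cont : ContinuousOn rho'' (Iio VR ∪ Ioo VR VF)
  rho_VF : rho VF = 0
  rho_bot : Tendsto rho atBot (nhds 0)
  vrho_bot : Tendsto (fun v => v * rho v) atBot (nhds 0)
  rho'_bot : Tendsto rho' atBot (nhds 0)
  vrho'_bot : Tendsto (fun v => v * rho' v) atBot (nhds 0)
  vrho_int : IntegrableOn (fun v => v * rho v) (Iic VF)
  limm_def : Tendsto rho' (nhdsWithin VR (Iio VR)) (nhds limm)
  limp_def : Tendsto rho' (nhdsWithin VR (Ioi VR)) (nhds limp)
  rho'_VF : HasDerivWithinAt rho (rho' VF) (Iic VF) VF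
  Ninf_def : Ninf = -a * rho' VF
  ode : ∀ v ∈ Iio VR ∪ Ioo VR VF, -(rho v) + (-v + b * Ninf) * rho' v = a * rho'' v
  jump : a * (limm - limp) = Ninf

/-!
The flux `J = (-v + b N) ρ - a ρ'` has zero derivative off `V_R` by the steady-state equation.
It vanishes at `-∞`, hence on `(-∞, V_R)`, and the jump condition makes it equal to `N` on
`(V_R, V_F)`. Integrating `v ρ = b N ρ - J - a ρ'` over `(-∞, V_F]` gives
`b N - N (V_F - V_R) - a (ρ(V_F) - ρ(-∞))`, and `ρ` vanishes at both ends.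
-/

theorem IsOpen.eq_of_hasDerivAt_zero_of_tendsto {𝕜 G : Type*} [RCLike 𝕜]
    [NormedAddCommGroup G] [NormedSpace 𝕜 G] {f : 𝕜 → G} {s : Set 𝕜} {l : Filter 𝕜} [l.NeBot]
    {L : G} (hs : IsOpen s) (hs' : IsPreconnected s) (hf : ∀ x ∈ s, HasDerivAt f 0 x)
    (hsl : s ∈ l) (hL : Tendsto f l (𝓝 L)) {x : 𝕜} (hx : x ∈ s) : f x = L := by
  have hconst : ∀ y ∈ s, f y = f x := fun y hy =>
    hs.is_const_of_deriv_eq_zero hs'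
      (fun z hz => (hf z hz).differentiableAt.differentiableWithinAt)
      (fun z hz => (hf z hz).deriv) hy hx
  exact tendsto_nhds_unique (tendsto_const_nhds.congr' (eventually_of_mem hsl fun y hy =>
    (hconst y hy).symm)) hL

theorem integral_Iic_of_hasDerivAt_on_Iio_union_Ioo {f f' : ℝ → ℝ} {c d m : ℝ} (hcd : c ≤ d)
    (hcont : ContinuousOn f (Iic d)) (hderiv : ∀ x ∈ Iio c ∪ Ioo c d, HasDerivAt f (f' x) x)
    (hint : IntegrableOn f' (Iic d)) (hf : Tendsto f atBot (𝓝 m)) :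
    ∫ x in Iic d, f' x = f d - m := by
  have hleft : ∫ x in Iic c, f' x = f c - m :=
    integral_Iic_of_hasDerivAt_of_tendsto
      ((hcont.continuousWithinAt hcd).mono (Iic_subset_Iic.2 hcd))
      (fun x hx => hderiv x (Or.inl hx)) (hint.mono_set (Iic_subset_Iic.2 hcd)) hf
  have hright : ∫ x in c..d, f' x = f d - f c :=
    intervalIntegral.integral_eq_sub_of_hasDerivAt_of_le hcd (hcont.mono Icc_subset_Iic_self)
      (fun x hx => hderiv x (Or.inr hx))
      ((intervalIntegrable_iff_integrableOn_Icc_of_le hcd).2 (hint.mono_set Icc_subset_Iic_self))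
  rw [← sub_add_cancel (∫ x in Iic d, f' x) (∫ x in Iic c, f' x),
    intervalIntegral.integral_Iic_sub_Iic (hint.mono_set (Iic_subset_Iic.2 hcd)) hint, hright,
    hleft]
  ring

theorem ae_restrict_Iic_mem_Iio_union_Ioo (c d : ℝ) :
    ∀ᵐ v ∂volume.restrict (Iic d), v ∈ Iio c ∪ Ioo c d := by
  have hnull : volume ({c, d} : Set ℝ) = 0 := (toFinite _).measure_zero _
  filter_upwards [ae_restrict_mem measurableSet_Iic,
    ae_restrict_of_ae (measure_eq_zero_iff_ae_notMem.1 hnull)] with v hd hv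
  simp only [mem_insert_iff, mem_singleton_iff, not_or] at hv
  rcases lt_or_gt_of_ne hv.1 with h | h
  exacts [Or.inl h, Or.inr ⟨h, hd.out.lt_of_ne hv.2⟩]

namespace NNLIFSteadyState

variable {a b VR VF : ℝ} (S : NNLIFSteadyState a b VR VF)

def flux (v : ℝ) : ℝ := (-v + b * S.Ninf) * S.rho v - a * S.rho' v

theorem a_ne_zero (S : NNLIFSteadyState a b VR VF) : a ≠ 0 := by
  rintro rfl
  simpa [S.Ninf_def] using S.Ninf_pos

theorem hasDerivAt_rho (hV : VR < VF) {v : ℝ} (hv : v ∈ Iio VR ∪ Ioo VR VF) :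
    HasDerivAt S.rho (S.rho' v) v :=
  (S.rho'_def v hv).hasDerivAt 
    (Iic_mem_nhds (union_subset (Iio_subset_Iio hV.le) Ioo_subset_Iio_self hv))

theorem hasDerivAt_rho' (hV : VR < VF) {v : ℝ} (hv : v ∈ Iio VR ∪ Ioo VR VF) :
    HasDerivAt S.rho' (S.rho'' v) v :=
  (S.rho''_def v hv).hasDerivAt 
    (Iic_mem_nhds (union_subset (Iio_subset_Iio hV.le) Ioo_subset_Iio_self hv))

theorem hasDerivAt_flux (hV : VR < VF) {v : ℝ} (hv : v ∈ Iio VR ∪ Ioo VR VF) :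
    HasDerivAt S.flux 0 v := by
  have h := ((((hasDerivAt_neg v).add_const (b * S.Ninf)).mul (S.hasDerivAt_rho hV hv)).sub
    ((S.hasDerivAt_rho' hV hv).const_mul a))
  refine h.congr_deriv ?_
  linarith [S.ode v hv]

theorem tendsto_flux_atBot : Tendsto S.flux atBot (𝓝 0) := by
  have h := (S.vrho_bot.neg.add (S.rho_bot.const_mul (b * S.Ninf))).sub (S.rho'_bot.const_mul a)
  simp only [neg_zero, mul_zero, add_zero, sub_zero] at h
  exact h.congr fun v => by simp only [flux]; ring

theorem tendsto_flux_nhdsWithin (hV : VR ≤ VF) {s : Set ℝ} (hs : s ⊆ Iic VF) {L : ℝ}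
    (hL : Tendsto S.rho' (𝓝[s] VR) (𝓝 L)) :
    Tendsto S.flux (𝓝[s] VR) (𝓝 ((-VR + b * S.Ninf) * S.rho VR - a * L)) := by
  have hrho : Tendsto S.rho (𝓝[s] VR) (𝓝 (S.rho VR)) :=
    ((S.rho_cont VR hV).mono hs).tendsto
  have hlin : Tendsto (fun v : ℝ => -v + b * S.Ninf) (𝓝[s] VR) (𝓝 (-VR + b * S.Ninf)) :=
    ((continuous_neg.add continuous_const).tendsto VR).mono_left nhdsWithin_le_nhds
  exact (hlin.mul hrho).sub (hL.const_mul a)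

theorem flux_eq_zero (hV : VR < VF) {v : ℝ} (hv : v ∈ Iio VR) : S.flux v = 0 :=
  isOpen_Iio.eq_of_hasDerivAt_zero_of_tendsto isPreconnected_Iio
    (fun _ hx => S.hasDerivAt_flux hV (Or.inl hx)) (Iio_mem_atBot VR) S.tendsto_flux_atBot hv

theorem flux_eq_Ninf (hV : VR < VF) {v : ℝ} (hv : v ∈ Ioo VR VF) : S.flux v = S.Ninf := by
  have hleft : (-VR + b * S.Ninf) * S.rho VR - a * S.limm = 0 :=
    tendsto_nhds_unique
      (S.tendsto_flux_nhdsWithin hV.le (fun _ h => h.out.le.trans hV.le) S.limm_def)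
      (tendsto_const_nhds.congr' (eventually_nhdsWithin_of_forall fun _ h =>
        (S.flux_eq_zero hV h).symm))
  have hright : S.flux v = (-VR + b * S.Ninf) * S.rho VR - a * S.limp :=
    isOpen_Ioo.eq_of_hasDerivAt_zero_of_tendsto isPreconnected_Ioo
      (fun _ hx => S.hasDerivAt_flux hV (Or.inr hx)) (Ioo_mem_nhdsGT hV)
      ((S.tendsto_flux_nhdsWithin hV.le (fun _ h => h.2.le) (S.limp_def.mono_left
        (nhdsWithin_mono _ fun _ h => h.1))).mono_left
        (nhdsWithin_le_of_mem (Ioo_mem_nhdsGT hV))) hv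
  linarith [S.jump]

theorem flux_ae_eq_indicator (hV : VR < VF) :
    S.flux =ᵐ[volume.restrict (Iic VF)] (Ioo VR VF).indicator fun _ => S.Ninf := by
  filter_upwards [ae_restrict_Iic_mem_Iio_union_Ioo VR VF] with v hv
  rcases hv with h | h
  · rw [S.flux_eq_zero hV h, indicator_of_notMem fun h' => h'.1.not_gt h]
  · rw [S.flux_eq_Ninf hV h, indicator_of_mem h]

theorem integrableOn_flux (hV : VR < VF) : IntegrableOn S.flux (Iic VF) :=
  (((integrable_indicator_iff measurableSet_Ioo).2
    (integrableOn_const measure_Ioo_lt_top.ne)).integrableOn).congr_fun_ae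
    (S.flux_ae_eq_indicator hV).symm

theorem integral_flux (hV : VR < VF) : ∫ v in Iic VF, S.flux v = S.Ninf * (VF - VR) := by
  rw [integral_congr_ae (S.flux_ae_eq_indicator hV), setIntegral_indicator measurableSet_Ioo,
    inter_eq_right.2 fun _ h => h.2.le, setIntegral_const, Real.volume_real_Ioo_of_le hV.le,
    smul_eq_mul, mul_comm]

theorem rho'_eq (v : ℝ) : S.rho' v = a⁻¹ * ((-v + b * S.Ninf) * S.rho v - S.flux v) := by
  rw [flux, sub_sub_cancel, inv_mul_cancel_left₀ S.a_ne_zero]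

theorem integrableOn_rho' (hV : VR < VF) : IntegrableOn S.rho' (Iic VF) := by
  have hlin : IntegrableOn (fun v => (-v + b * S.Ninf) * S.rho v) (Iic VF) :=
    (S.vrho_int.neg.add (S.rho_int.const_mul (b * S.Ninf))).congr_fun
      (fun v _ => by simp only [Pi.add_apply, Pi.neg_apply]; ring) measurableSet_Iic
  exact IntegrableOn.congr_fun ((hlin.sub (S.integrableOn_flux hV)).const_mul a⁻¹)
    (fun v _ => (S.rho'_eq v).symm) measurableSet_Iic

theorem integral_rho' (hV : VR < VF) : ∫ v in Iic VF, S.rho' v = 0 := by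
  rw [integral_Iic_of_hasDerivAt_on_Iio_union_Ioo hV.le S.rho_cont
    (fun _ hv => S.hasDerivAt_rho hV hv) (S.integrableOn_rho' hV) S.rho_bot, S.rho_VF, sub_zero]

end NNLIFSteadyState

theorem stmt14_general (a b VR VF : ℝ) (hV : VR < VF)
    (S : NNLIFSteadyState a b VR VF) :
    (∫ v in Iic VF, v * S.rho v) = (b - (VF - VR)) * S.Ninf := by
  have hrho : IntegrableOn (fun v => b * S.Ninf * S.rho v) (Iic VF) := S.rho_int.const_mul _
  have hdiff : IntegrableOn (fun v => b * S.Ninf * S.rho v - S.flux v) (Iic VF) :=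
    hrho.sub (S.integrableOn_flux hV)
  have hmoment : ∀ v, v * S.rho v = b * S.Ninf * S.rho v - S.flux v - a * S.rho' v := fun v => by
    rw [NNLIFSteadyState.flux]; ring
  simp only [hmoment]
  rw [integral_sub hdiff ((S.integrableOn_rho' hV).const_mul a),
    integral_sub hrho (S.integrableOn_flux hV), integral_const_mul, integral_const_mul,
    S.rho_mass, S.integral_flux hV, S.integral_rho' hV]
  ring

/-- the first-moment identity for steady states of the NNLIF
system (with `b0 = 0`). -/
theorem stmt14 (a b VR VF : ℝ) (ha : 0 < a) (hV : VR < VF)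
    (S : NNLIFSteadyState a b VR VF) :
    (∫ v in Iic VF, v * S.rho v) = (b - (VF - VR)) * S.Ninf :=
  stmt14_general a b VR VF hV S
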